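/- arXiv:1205.5012 — 4 statements merged into one kernel-verified Lean document; each statement's English description precedes it below -/
import Mathlib

section
/- Fix z ∈ ℝᵈ and a real constant c. The function g : (0,∞) × ℝᵈ → ℝ defined by g(β, w) = -(1/2)·log β + (⟨w, z⟩ - β·c)²/(2β) is jointly convex in (β, w) on the region β > 0. -/
open Matrix

/-- Quadratic-over-linear inequality: joint convexity of u²/x on x > 0. -/
lemma quad_over_lin (u v x y t s : ℝ) (hx : 0 < x) (hy : 0 < y)
    (ht : 0 ≤ t) (hs : 0 ≤ s) (hts : t + s = 1) :
    (t * u + s * v) ^ 2 / (t * x + s * y) ≤ t * (u ^ 2 / x) + s * (v ^ 2 / y) := by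
  rcases ht.lt_or_eq with ht' | ht'
  · rcases hs.lt_or_eq with hs' | hs'
    · have hden : 0 < t * x + s * y := by positivity
      have e : t * (u ^ 2 / x) + s * (v ^ 2 / y) = (t * u ^ 2 * y + s * v ^ 2 * x) / (x * y) := by
        field_simp
      rw [div_le_iff₀ hden, e, div_mul_eq_mul_div, le_div_iff₀ (mul_pos hx hy)]
      nlinarith [mul_nonneg (mul_nonneg ht hs) (sq_nonneg (u * y - v * x))]
    · have : t = 1 := by linarith
      subst this
      have : s = 0 := by linarith
      subst this
      simp
  · have : t = 0 := ht'.symm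
    subst this
    have : s = 1 := by linarith
    subst this
    simp

/-- The negative log conditional density of a continuous node,
g(β, w) = -(1/2)·log β + (⟨w, z⟩ - β·c)²/(2β), is jointly convex on {β > 0}. -/
theorem gaussian_node_neg_log_convex (d : ℕ) (z : Fin d → ℝ) (c : ℝ) :
    ConvexOn ℝ {p : ℝ × (Fin d → ℝ) | 0 < p.1}
      (fun p : ℝ × (Fin d → ℝ) =>
        -(1 / 2) * Real.log p.1 + (p.2 ⬝ᵥ z - p.1 * c) ^ 2 / (2 * p.1)) := by
  constructor
  · -- convexity of the set
    intro p hp q hq a b ha hb hab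
    simp only [Set.mem_setOf_eq] at *
    rcases ha.lt_or_eq with ha' | ha'
    · have : 0 < a * p.1 := mul_pos ha' hp
      have : 0 ≤ b * q.1 := mul_nonneg hb hq.le
      show 0 < a * p.1 + b * q.1
      linarith
    · have hb1 : b = 1 := by linarith
      show 0 < a * p.1 + b * q.1
      rw [← ha', hb1]; simpa using hq
  · intro p hp q hq a b ha hb hab
    simp only [Set.mem_setOf_eq] at hp hq
    have hden : 0 < a * p.1 + b * q.1 := by
      rcases ha.lt_or_eq with ha' | ha'
      · nlinarith [mul_nonneg hb hq.le]
      · rw [← ha'] at hab ⊢; simp at hab ⊢; rw [hab]; simpa using hq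
    -- log part
    have hlog : a • Real.log p.1 + b • Real.log q.1 ≤ Real.log (a * p.1 + b * q.1) := by
      have := (strictConcaveOn_log_Ioi.concaveOn).2
        (Set.mem_Ioi.mpr hp) (Set.mem_Ioi.mpr hq) ha hb hab
      simpa using this
    simp only [smul_eq_mul] at hlog
    have hlog' : -(1/2) * Real.log (a * p.1 + b * q.1) ≤
        a * (-(1/2) * Real.log p.1) + b * (-(1/2) * Real.log q.1) := by nlinarith
    -- quadratic part
    set u := p.2 ⬝ᵥ z - p.1 * c with hu
    set v := q.2 ⬝ᵥ z - q.1 * c with hv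
    have hquad := quad_over_lin u v (2 * p.1) (2 * q.1) a b
      (by positivity) (by positivity) ha hb hab
    -- unfold the combination
    show -(1/2) * Real.log ((a • p + b • q).1) +
        ((a • p + b • q).2 ⬝ᵥ z - (a • p + b • q).1 * c) ^ 2 / (2 * (a • p + b • q).1) ≤
        a • (-(1/2) * Real.log p.1 + u ^ 2 / (2 * p.1)) +
        b • (-(1/2) * Real.log q.1 + v ^ 2 / (2 * q.1))
    have h1 : (a • p + b • q).1 = a * p.1 + b * q.1 := rfl
    have h2 : (a • p + b • q).2 ⬝ᵥ z = a * (p.2 ⬝ᵥ z) + b * (q.2 ⬝ᵥ z) := by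
      show (a • p.2 + b • q.2) ⬝ᵥ z = _
      rw [add_dotProduct, smul_dotProduct, smul_dotProduct, smul_eq_mul, smul_eq_mul]
    rw [h1, h2]
    have hnum : a * (p.2 ⬝ᵥ z) + b * (q.2 ⬝ᵥ z) - (a * p.1 + b * q.1) * c = a * u + b * v := by
      rw [hu, hv]; ring
    have hden2 : 2 * (a * p.1 + b * q.1) = a * (2 * p.1) + b * (2 * q.1) := by ring
    rw [hnum, hden2]
    simp only [smul_eq_mul]
    nlinarith [hquad, hlog']
end

section
/- Consider p continuous variables and q discrete variables where the j-th discrete variable takes L_j states, and parameters Θ = ({β_st}_{s,t=1}^p with β_st = β_ts, {α_s}_{s=1}^p, {ρ_sj : {1,…,L_j} → ℝ}, {φ_rj : {1,…,L_r}×{1,…,L_j} → ℝ}). For a fixed observation (x, y) with x ∈ ℝᵖ and y_j ∈ {1,…,L_j}, define the negative log pseudolikelihood ℓ̃(Θ) = ∑_{s=1}^p [ -(1/2)·log β_ss + (β_ss/2)·( (α_s + ∑_j ρ_sj(y_j) - ∑_{t≠s} β_st x_t)/β_ss - x_s )² ] + ∑_{r=1}^q [ log( ∑_{l=1}^{L_r}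 exp( ∑_s ρ_sr(l) x_s + φ_rr(l,l) + ∑_{j≠r} φ_rj(l, y_j) ) ) - ( ∑_s ρ_sr(y_r) x_s + φ_rr(y_r,y_r) + ∑_{j≠r} φ_rj(y_r, y_j) ) ]. Then ℓ̃ is jointly convex in all the parameters Θ on the region {β_ss > 0 for all s = 1,…,p}. -/
open Finset



lemma combo_pos {a b u v : ℝ} (ha : 0 ≤ a) (hb : 0 ≤ b) (hab : a + b = 1)
    (hu : 0 < u) (hv : 0 < v) : 0 < a * u + b * v := by
  rcases ha.lt_or_eq with h | h
  · exact add_pos_of_pos_of_nonneg (mul_pos h hu) (mul_nonneg hb hv.le)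
  · have hb1 : b = 1 := by linarith
    simp [← h, hb1, hv]

lemma quad_div (w₁ w₂ : ℝ) {b₁ b₂ a c : ℝ} (hb₁ : 0 < b₁) (hb₂ : 0 < b₂)
    (ha : 0 ≤ a) (hc : 0 ≤ c) (hac : a + c = 1) :
    (a * w₁ + c * w₂) ^ 2 / (2 * (a * b₁ + c * b₂))
      ≤ a * (w₁ ^ 2 / (2 * b₁)) + c * (w₂ ^ 2 / (2 * b₂)) := by
  have hB : 0 < a * b₁ + c * b₂ := combo_pos ha hc hac hb₁ hb₂
  have hR : a * (w₁ ^ 2 / (2 * b₁)) + c * (w₂ ^ 2 / (2 * b₂))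
      = (a * w₁ ^ 2 * b₂ + c * w₂ ^ 2 * b₁) / (2 * b₁ * b₂) := by
    field_simp
  rw [hR, div_le_div_iff₀ (by positivity) (by positivity)]
  nlinarith [mul_nonneg (mul_nonneg ha hc) (sq_nonneg (w₁ * b₂ - w₂ * b₁)),
    mul_pos hb₁ hb₂, sq_nonneg w₁, sq_nonneg w₂, mul_nonneg ha hc]

lemma gauss_term_convex (xs : ℝ) {b₁ b₂ : ℝ} (hb₁ : 0 < b₁) (hb₂ : 0 < b₂)
    (u₁ u₂ : ℝ) {a c : ℝ} (ha : 0 ≤ a) (hc : 0 ≤ c) (hac : a + c = 1) :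
    -(1/2) * Real.log (a * b₁ + c * b₂) +
      ((a * b₁ + c * b₂) / 2) * ((a * u₁ + c * u₂) / (a * b₁ + c * b₂) - xs) ^ 2
    ≤ a * (-(1/2) * Real.log b₁ + (b₁ / 2) * (u₁ / b₁ - xs) ^ 2)
      + c * (-(1/2) * Real.log b₂ + (b₂ / 2) * (u₂ / b₂ - xs) ^ 2) := by
  have hB : 0 < a * b₁ + c * b₂ := combo_pos ha hc hac hb₁ hb₂
  have key : ∀ {b u : ℝ}, 0 < b → (b / 2) * (u / b - xs) ^ 2 = (u - b * xs) ^ 2 / (2 * b) := by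
    intro b u hb
    field_simp
  rw [key hB, key hb₁, key hb₂]
  have hlog : a * Real.log b₁ + c * Real.log b₂ ≤ Real.log (a * b₁ + c * b₂) := by
    have := strictConcaveOn_log_Ioi.concaveOn.2 (Set.mem_Ioi.2 hb₁) (Set.mem_Ioi.2 hb₂)
      ha hc hac
    simpa [smul_eq_mul] using this
  have hquad := quad_div (u₁ - b₁ * xs) (u₂ - b₂ * xs) hb₁ hb₂ ha hc hac
  have hw : a * u₁ + c * u₂ - (a * b₁ + c * b₂) * xs
      = a * (u₁ - b₁ * xs) + c * (u₂ - b₂ * xs) := by ring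
  rw [hw]
  nlinarith [hlog, hquad]

lemma lse_convex {n : ℕ} [Nonempty (Fin n)] (f₁ f₂ : Fin n → ℝ) {a c : ℝ}
    (ha : 0 ≤ a) (hc : 0 ≤ c) (hac : a + c = 1) :
    Real.log (∑ l : Fin n, Real.exp (a * f₁ l + c * f₂ l))
      ≤ a * Real.log (∑ l : Fin n, Real.exp (f₁ l))
        + c * Real.log (∑ l : Fin n, Real.exp (f₂ l)) := by
  set S := ∑ l : Fin n, Real.exp (f₁ l) with hS
  set T := ∑ l : Fin n, Real.exp (f₂ l) with hT
  have hSpos : 0 < S := Finset.sum_pos (fun l _ => Real.exp_pos _) univ_nonempty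
  have hTpos : 0 < T := Finset.sum_pos (fun l _ => Real.exp_pos _) univ_nonempty
  have key : (∑ l : Fin n, Real.exp (a * f₁ l + c * f₂ l)) ≤ S ^ a * T ^ c := by
    have hterm : ∀ l : Fin n, Real.exp (a * f₁ l + c * f₂ l)
        ≤ S ^ a * T ^ c * (a * (Real.exp (f₁ l) / S) + c * (Real.exp (f₂ l) / T)) := by
      intro l
      have h1 : Real.exp (a * f₁ l + c * f₂ l)
          = (Real.exp (f₁ l) / S) ^ a * (Real.exp (f₂ l) / T) ^ c * (S ^ a * T ^ c) := by
        rw [Real.div_rpow (Real.exp_pos _).le hSpos.le,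
          Real.div_rpow (Real.exp_pos _).le hTpos.le, Real.exp_add,
          mul_comm a (f₁ l), mul_comm c (f₂ l), Real.exp_mul, Real.exp_mul]
        field_simp
      rw [h1]
      have hgm := Real.geom_mean_le_arith_mean2_weighted ha hc
        (by positivity : (0:ℝ) ≤ Real.exp (f₁ l) / S)
        (by positivity : (0:ℝ) ≤ Real.exp (f₂ l) / T) hac
      calc (Real.exp (f₁ l) / S) ^ a * (Real.exp (f₂ l) / T) ^ c * (S ^ a * T ^ c)
          ≤ (a * (Real.exp (f₁ l) / S) + c * (Real.exp (f₂ l) / T)) * (S ^ a * T ^ c) := by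
            apply mul_le_mul_of_nonneg_right hgm (by positivity)
        _ = S ^ a * T ^ c * (a * (Real.exp (f₁ l) / S) + c * (Real.exp (f₂ l) / T)) := by ring
    calc (∑ l : Fin n, Real.exp (a * f₁ l + c * f₂ l))
        ≤ ∑ l : Fin n, S ^ a * T ^ c * (a * (Real.exp (f₁ l) / S) + c * (Real.exp (f₂ l) / T)) :=
          Finset.sum_le_sum fun l _ => hterm l
      _ = S ^ a * T ^ c * (a * (S / S) + c * (T / T)) := by
          rw [← Finset.mul_sum]
          congr 1
          rw [Finset.sum_add_distrib, ← Finset.mul_sum, ← Finset.mul_sum,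
            ← Finset.sum_div, ← Finset.sum_div, ← hS, ← hT]
      _ = S ^ a * T ^ c := by
          rw [div_self hSpos.ne', div_self hTpos.ne']
          rw [mul_one, mul_one, hac, mul_one]
  calc Real.log (∑ l : Fin n, Real.exp (a * f₁ l + c * f₂ l))
      ≤ Real.log (S ^ a * T ^ c) :=
        Real.log_le_log (Finset.sum_pos (fun l _ => Real.exp_pos _) univ_nonempty) key
    _ = a * Real.log S + c * Real.log T := by
        rw [Real.log_mul (by positivity) (by positivity), Real.log_rpow hSpos,
          Real.log_rpow hTpos]

/-- Proposition 1: the negative log pseudolikelihood of the pairwise mixed graphical model is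
jointly convex in all the parameters (β, α, ρ, φ) over the region where β is symmetric and
β_ss > 0 for all s. -/
theorem neg_log_pseudolikelihood_convex (p q : ℕ) (L : Fin q → ℕ)
    (x : Fin p → ℝ) (y : (j : Fin q) → Fin (L j)) :
    ConvexOn ℝ
      {Θ : (Fin p → Fin p → ℝ) × (Fin p → ℝ) ×
            ((s : Fin p) → (j : Fin q) → Fin (L j) → ℝ) ×
            ((r : Fin q) → (j : Fin q) → Fin (L r) → Fin (L j) → ℝ) |
          (∀ s t, Θ.1 s t = Θ.1 t s) ∧ (∀ s, 0 < Θ.1 s s)}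
      (fun Θ =>
        (∑ s : Fin p,
          (-(1 / 2) * Real.log (Θ.1 s s) +
            (Θ.1 s s / 2) *
              ((Θ.2.1 s + ∑ j : Fin q, Θ.2.2.1 s j (y j)
                  - ∑ t ∈ ({s}ᶜ : Finset (Fin p)), Θ.1 s t * x t) / (Θ.1 s s) - x s) ^ 2))
        + ∑ r : Fin q,
          (Real.log (∑ l : Fin (L r), Real.exp
              ((∑ s : Fin p, Θ.2.2.1 s r l * x s) + Θ.2.2.2 r r l l
                + ∑ j ∈ ({r}ᶜ : Finset (Fin q)), Θ.2.2.2 r j l (y j)))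
            - ((∑ s : Fin p, Θ.2.2.1 s r (y r) * x s) + Θ.2.2.2 r r (y r) (y r)
                + ∑ j ∈ ({r}ᶜ : Finset (Fin q)), Θ.2.2.2 r j (y r) (y j)))) := by
  constructor
  · intro Θ₁ h₁ Θ₂ h₂ a c ha hc hac
    refine ⟨fun s t => ?_, fun s => ?_⟩
    · simp only [Prod.fst_add, Prod.smul_fst, Pi.add_apply, Pi.smul_apply, smul_eq_mul]
      rw [h₁.1 s t, h₂.1 s t]
    · simp only [Prod.fst_add, Prod.smul_fst, Pi.add_apply, Pi.smul_apply, smul_eq_mul]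
      exact combo_pos ha hc hac (h₁.2 s) (h₂.2 s)
  · intro Θ₁ h₁ Θ₂ h₂ a c ha hc hac
    simp only [Prod.fst_add, Prod.smul_fst, Prod.snd_add, Prod.smul_snd, Pi.add_apply,
      Pi.smul_apply, smul_eq_mul]
    have key1 : ∀ s : Fin p,
        -(1 / 2) * Real.log (a * Θ₁.1 s s + c * Θ₂.1 s s) +
          (a * Θ₁.1 s s + c * Θ₂.1 s s) / 2 *
            ((a * Θ₁.2.1 s + c * Θ₂.2.1 s +
                ∑ j : Fin q, (a * Θ₁.2.2.1 s j (y j) + c * Θ₂.2.2.1 s j (y j)) -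
                ∑ t ∈ ({s}ᶜ : Finset (Fin p)), (a * Θ₁.1 s t + c * Θ₂.1 s t) * x t) /
              (a * Θ₁.1 s s + c * Θ₂.1 s s) - x s) ^ 2
        ≤ a * (-(1 / 2) * Real.log (Θ₁.1 s s) +
              Θ₁.1 s s / 2 *
                ((Θ₁.2.1 s + ∑ j : Fin q, Θ₁.2.2.1 s j (y j)
                    - ∑ t ∈ ({s}ᶜ : Finset (Fin p)), Θ₁.1 s t * x t) / Θ₁.1 s s - x s) ^ 2)
          + c * (-(1 / 2) * Real.log (Θ₂.1 s s) +
              Θ₂.1 s s / 2 *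
                ((Θ₂.2.1 s + ∑ j : Fin q, Θ₂.2.2.1 s j (y j)
                    - ∑ t ∈ ({s}ᶜ : Finset (Fin p)), Θ₂.1 s t * x t) / Θ₂.1 s s - x s) ^ 2) := by
      intro s
      have harg : a * Θ₁.2.1 s + c * Θ₂.2.1 s +
            ∑ j : Fin q, (a * Θ₁.2.2.1 s j (y j) + c * Θ₂.2.2.1 s j (y j)) -
            ∑ t ∈ ({s}ᶜ : Finset (Fin p)), (a * Θ₁.1 s t + c * Θ₂.1 s t) * x t
          = a * (Θ₁.2.1 s + ∑ j : Fin q, Θ₁.2.2.1 s j (y j)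
              - ∑ t ∈ ({s}ᶜ : Finset (Fin p)), Θ₁.1 s t * x t)
            + c * (Θ₂.2.1 s + ∑ j : Fin q, Θ₂.2.2.1 s j (y j)
              - ∑ t ∈ ({s}ᶜ : Finset (Fin p)), Θ₂.1 s t * x t) := by
        simp only [add_mul, mul_assoc, Finset.sum_add_distrib, ← Finset.mul_sum]
        ring
      rw [harg]
      exact gauss_term_convex (x s) (h₁.2 s) (h₂.2 s) _ _ ha hc hac
    have key2 : ∀ r : Fin q,
        Real.log (∑ l : Fin (L r), Real.exp
            (∑ s : Fin p, (a * Θ₁.2.2.1 s r l + c * Θ₂.2.2.1 s r l) * x s +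
              (a * Θ₁.2.2.2 r r l l + c * Θ₂.2.2.2 r r l l) +
              ∑ j ∈ ({r}ᶜ : Finset (Fin q)),
                (a * Θ₁.2.2.2 r j l (y j) + c * Θ₂.2.2.2 r j l (y j)))) -
          (∑ s : Fin p, (a * Θ₁.2.2.1 s r (y r) + c * Θ₂.2.2.1 s r (y r)) * x s +
            (a * Θ₁.2.2.2 r r (y r) (y r) + c * Θ₂.2.2.2 r r (y r) (y r)) +
            ∑ j ∈ ({r}ᶜ : Finset (Fin q)),
              (a * Θ₁.2.2.2 r j (y r) (y j) + c * Θ₂.2.2.2 r j (y r) (y j)))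
        ≤ a * (Real.log (∑ l : Fin (L r), Real.exp
                (∑ s : Fin p, Θ₁.2.2.1 s r l * x s + Θ₁.2.2.2 r r l l +
                  ∑ j ∈ ({r}ᶜ : Finset (Fin q)), Θ₁.2.2.2 r j l (y j))) -
              (∑ s : Fin p, Θ₁.2.2.1 s r (y r) * x s + Θ₁.2.2.2 r r (y r) (y r) +
                ∑ j ∈ ({r}ᶜ : Finset (Fin q)), Θ₁.2.2.2 r j (y r) (y j)))
          + c * (Real.log (∑ l : Fin (L r), Real.exp
                (∑ s : Fin p, Θ₂.2.2.1 s r l * x s + Θ₂.2.2.2 r r l l +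
                  ∑ j ∈ ({r}ᶜ : Finset (Fin q)), Θ₂.2.2.2 r j l (y j))) -
              (∑ s : Fin p, Θ₂.2.2.1 s r (y r) * x s + Θ₂.2.2.2 r r (y r) (y r) +
                ∑ j ∈ ({r}ᶜ : Finset (Fin q)), Θ₂.2.2.2 r j (y r) (y j))) := by
      intro r
      haveI : Nonempty (Fin (L r)) := ⟨y r⟩
      set f₁ : Fin (L r) → ℝ := fun l =>
        ∑ s : Fin p, Θ₁.2.2.1 s r l * x s + Θ₁.2.2.2 r r l l +
          ∑ j ∈ ({r}ᶜ : Finset (Fin q)), Θ₁.2.2.2 r j l (y j) with hf₁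
      set f₂ : Fin (L r) → ℝ := fun l =>
        ∑ s : Fin p, Θ₂.2.2.1 s r l * x s + Θ₂.2.2.2 r r l l +
          ∑ j ∈ ({r}ᶜ : Finset (Fin q)), Θ₂.2.2.2 r j l (y j) with hf₂
      have hargl : ∀ l : Fin (L r),
          ∑ s : Fin p, (a * Θ₁.2.2.1 s r l + c * Θ₂.2.2.1 s r l) * x s +
            (a * Θ₁.2.2.2 r r l l + c * Θ₂.2.2.2 r r l l) +
            ∑ j ∈ ({r}ᶜ : Finset (Fin q)),
              (a * Θ₁.2.2.2 r j l (y j) + c * Θ₂.2.2.2 r j l (y j))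
          = a * f₁ l + c * f₂ l := by
        intro l
        simp only [hf₁, hf₂, add_mul, mul_assoc, Finset.sum_add_distrib, ← Finset.mul_sum]
        ring
      have hg :
          ∑ s : Fin p, (a * Θ₁.2.2.1 s r (y r) + c * Θ₂.2.2.1 s r (y r)) * x s +
            (a * Θ₁.2.2.2 r r (y r) (y r) + c * Θ₂.2.2.2 r r (y r) (y r)) +
            ∑ j ∈ ({r}ᶜ : Finset (Fin q)),
              (a * Θ₁.2.2.2 r j (y r) (y j) + c * Θ₂.2.2.2 r j (y r) (y j))
          = a * f₁ (y r) + c * f₂ (y r) := hargl (y r)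
      have h := lse_convex f₁ f₂ ha hc hac
      simp only [hargl, hg]
      rw [hf₁, hf₂]
      have e₁ : f₁ (y r) = ∑ s : Fin p, Θ₁.2.2.1 s r (y r) * x s + Θ₁.2.2.2 r r (y r) (y r) +
          ∑ j ∈ ({r}ᶜ : Finset (Fin q)), Θ₁.2.2.2 r j (y r) (y j) := rfl
      have e₂ : f₂ (y r) = ∑ s : Fin p, Θ₂.2.2.1 s r (y r) * x s + Θ₂.2.2.2 r r (y r) (y r) +
          ∑ j ∈ ({r}ᶜ : Finset (Fin q)), Θ₂.2.2.2 r j (y r) (y j) := rfl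
      rw [← e₁, ← e₂]
      linarith [h]
    calc _ ≤ (∑ s : Fin p,
            (a * (-(1 / 2) * Real.log (Θ₁.1 s s) +
              Θ₁.1 s s / 2 *
                ((Θ₁.2.1 s + ∑ j : Fin q, Θ₁.2.2.1 s j (y j)
                    - ∑ t ∈ ({s}ᶜ : Finset (Fin p)), Θ₁.1 s t * x t) / Θ₁.1 s s - x s) ^ 2)
          + c * (-(1 / 2) * Real.log (Θ₂.1 s s) +
              Θ₂.1 s s / 2 *
                ((Θ₂.2.1 s + ∑ j : Fin q, Θ₂.2.2.1 s j (y j)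
                    - ∑ t ∈ ({s}ᶜ : Finset (Fin p)), Θ₂.1 s t * x t) / Θ₂.1 s s - x s) ^ 2)))
        + ∑ r : Fin q,
            (a * (Real.log (∑ l : Fin (L r), Real.exp
                (∑ s : Fin p, Θ₁.2.2.1 s r l * x s + Θ₁.2.2.2 r r l l +
                  ∑ j ∈ ({r}ᶜ : Finset (Fin q)), Θ₁.2.2.2 r j l (y j))) -
              (∑ s : Fin p, Θ₁.2.2.1 s r (y r) * x s + Θ₁.2.2.2 r r (y r) (y r) +
                ∑ j ∈ ({r}ᶜ : Finset (Fin q)), Θ₁.2.2.2 r j (y r) (y j)))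
          + c * (Real.log (∑ l : Fin (L r), Real.exp
                (∑ s : Fin p, Θ₂.2.2.1 s r l * x s + Θ₂.2.2.2 r r l l +
                  ∑ j ∈ ({r}ᶜ : Finset (Fin q)), Θ₂.2.2.2 r j l (y j))) -
              (∑ s : Fin p, Θ₂.2.2.1 s r (y r) * x s + Θ₂.2.2.2 r r (y r) (y r) +
                ∑ j ∈ ({r}ᶜ : Finset (Fin q)), Θ₂.2.2.2 r j (y r) (y j)))) :=
        add_le_add (Finset.sum_le_sum fun s _ => key1 s) (Finset.sum_le_sum fun r _ => key2 r)
      _ = _ := by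
        rw [Finset.sum_add_distrib, Finset.sum_add_distrib, ← Finset.mul_sum, ← Finset.mul_sum,
          ← Finset.mul_sum, ← Finset.mul_sum]
        ring
end

section
/- Let (X₁,Y₁),…,(Xₙ,Yₙ) be i.i.d. pairs of square-integrable real random variables such that Xᵢ is independent of Yᵢ. Let X̄ = (1/n)∑ᵢXᵢ and Ȳ = (1/n)∑ᵢYᵢ denote the sample means. Then E[ ( ∑_{i=1}^n (Xᵢ - X̄)(Yᵢ - Ȳ) )² ] = (n-1)·Var(X₁)·Var(Y₁). -/
/-!
Centre with the common means, `Aᵢ = Xᵢ - E X₁` and `Bᵢ = Yᵢ - E Y₁`. The sum of products of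
deviations from the sample means is `∑ᵢⱼ cᵢⱼ Aᵢ Bⱼ` with `c = I - J/n` the centering matrix.
Independence across pairs and within each pair gives `E[Aᵢ Bⱼ Aₖ Bₗ] = δᵢₖ δⱼₗ Var X₁ Var Y₁`,
so the expected square is `Var X₁ Var Y₁ ∑ᵢⱼ cᵢⱼ² = (n - 1) Var X₁ Var Y₁`.
-/

open MeasureTheory ProbabilityTheory Finset

noncomputable def centeringMatrix (ι : Type*) [Fintype ι] [DecidableEq ι] : Matrix ι ι ℝ :=
  Matrix.of fun i j => (if i = j then 1 else 0) - (Fintype.card ι : ℝ)⁻¹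

section Algebra

variable {ι : Type*} [Fintype ι] [DecidableEq ι]

theorem sum_sub_mean_mul_sub_mean_eq_sum_centeringMatrix [Nonempty ι] (a b : ι → ℝ) (s t : ℝ) :
    ∑ i, (a i - (∑ j, a j) / Fintype.card ι) * (b i - (∑ j, b j) / Fintype.card ι)
      = ∑ p : ι × ι, centeringMatrix ι p.1 p.2 * ((a p.1 - s) * (b p.2 - t)) := by
  have hN : (Fintype.card ι : ℝ) ≠ 0 := by positivity
  simp only [centeringMatrix, Matrix.of_apply, Fintype.sum_prod_type, sub_mul, ite_mul, one_mul,
    zero_mul, sum_sub_distrib, sum_ite_eq, mem_univ, if_true, ← mul_sum, ← sum_mul, mul_sub,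
    sum_const, card_univ, nsmul_eq_mul, Fintype.card_prod, Nat.cast_mul]
  field_simp
  ring

theorem sum_centeringMatrix_sq [Nonempty ι] :
    ∑ p : ι × ι, centeringMatrix ι p.1 p.2 ^ 2 = Fintype.card ι - 1 := by
  have hN : (Fintype.card ι : ℝ) ≠ 0 := by positivity
  simp only [centeringMatrix, Matrix.of_apply, Fintype.sum_prod_type, sub_sq, ite_pow, one_pow,
    ne_eq, OfNat.ofNat_ne_zero, not_false_eq_true, zero_pow, mul_ite, mul_one, mul_zero, ite_mul,
    zero_mul, sum_add_distrib, sum_sub_distrib, sum_ite_eq, mem_univ, if_true, sum_const,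
    card_univ, nsmul_eq_mul, Fintype.card_prod, Nat.cast_mul]
  field_simp
  ring

theorem prod_pow_single_add_single {R : Type*} [CommMonoid R] (x : ι → R) (i k : ι) :
    ∏ m, x m ^ ((Pi.single i 1 + Pi.single k 1 : ι → ℕ) m) = x i * x k := by
  simp only [Pi.add_apply, pow_add, prod_mul_distrib, Pi.single_apply, pow_ite, pow_one, pow_zero,
    prod_ite_eq', mem_univ, if_true]

theorem prod_single_add_single_eq_ite {M : Type*} [CommMonoidWithZero M] (g : ι → ℕ → M) {v : M}
    (h0 : ∀ m, g m 0 = 1) (h1 : ∀ m, g m 1 = 0) (h2 : ∀ m, g m 2 = v) (i k : ι) :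
    ∏ m, g m ((Pi.single i 1 + Pi.single k 1 : ι → ℕ) m) = if i = k then v else 0 := by
  split_ifs with hik
  · subst hik
    rw [prod_eq_single i (fun m _ hm => by simp [hm, h0]) (by simp)]
    simpa using h2 i
  · exact prod_eq_zero (mem_univ i) (by simpa [Ne.symm hik] using h1 i)

end Algebra

section Probability

variable {Ω : Type*} [MeasurableSpace Ω] {μ : Measure Ω}

theorem MeasureTheory.MemLp.integrable_pow_of_le_two [IsFiniteMeasure μ] {f : Ω → ℝ}
    (hf : MemLp f 2 μ) {a : ℕ} (ha : a ≤ 2) : Integrable (fun ω => f ω ^ a) μ := by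
  interval_cases a
  · simp
  · simpa using hf.integrable one_le_two
  · exact hf.integrable_sq

theorem ProbabilityTheory.iIndepFun.integrable_fun_prod {ι : Type*} [Fintype ι] {F : ι → Ω → ℝ}
    (hF : iIndepFun F μ) (hm : ∀ i, Measurable (F i)) (hint : ∀ i, Integrable (F i) μ) :
    Integrable (fun ω => ∏ i, F i ω) μ := by
  refine ⟨aestronglyMeasurable_fun_prod _ fun i _ => (hint i).1, ?_⟩
  have hind : iIndepFun (fun i ω => ‖F i ω‖ₑ) μ := hF.comp _ fun _ => measurable_enorm
  simp only [HasFiniteIntegral, enorm_eq_nnnorm, nnnorm_prod, ENNReal.ofNNReal_finsetProd]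
  simp only [← enorm_eq_nnnorm]
  rw [lintegral_prod_eq_prod_lintegral_of_indepFun _ _ hind fun i => (hm i).enorm]
  exact ENNReal.prod_lt_top fun i _ => (hint i).2

theorem ProbabilityTheory.IdentDistrib.integral_sub_integral_eq_zero [IsProbabilityMeasure μ]
    {X X₀ : Ω → ℝ} (h : IdentDistrib X X₀ μ μ) (hX₀ : Integrable X₀ μ) :
    ∫ ω, (X ω - μ[X₀]) ∂μ = 0 := by
  rw [integral_sub (h.integrable_iff.2 hX₀) (integrable_const _), h.integral_eq]
  simp

theorem ProbabilityTheory.IdentDistrib.integral_sub_integral_sq {X X₀ : Ω → ℝ}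
    (h : IdentDistrib X X₀ μ μ) (hX₀ : AEMeasurable X₀ μ) :
    ∫ ω, (X ω - μ[X₀]) ^ 2 ∂μ = variance X₀ μ := by
  rw [variance_eq_integral hX₀]
  exact (h.comp (u := fun x => (x - μ[X₀]) ^ 2) (by fun_prop)).integral_eq

variable {ι : Type*} [Fintype ι] {A B : ι → Ω → ℝ}

theorem integral_prod_pow_mul_pow (hAB : iIndepFun (fun m ω => (A m ω, B m ω)) μ)
    (hind : ∀ m, IndepFun (A m) (B m) μ) (hA : ∀ m, AEMeasurable (A m) μ)
    (hB : ∀ m, AEMeasurable (B m) μ) (a b : ι → ℕ) :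
    ∫ ω, ∏ m, A m ω ^ a m * B m ω ^ b m ∂μ
      = ∏ m, (∫ ω, A m ω ^ a m ∂μ) * ∫ ω, B m ω ^ b m ∂μ := by
  rw [hAB.integral_fun_prod_comp (f := fun m p => p.1 ^ a m * p.2 ^ b m)
    (fun m => (hA m).prodMk (hB m)) (fun m => by fun_prop)]
  refine prod_congr rfl fun m _ => ?_
  exact ((hind m).comp (measurable_id.pow_const _) (measurable_id.pow_const _))
    |>.integral_fun_mul_eq_mul_integral ((hA m).pow_const _).aestronglyMeasurable
      ((hB m).pow_const _).aestronglyMeasurable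

theorem integrable_prod_pow_mul_pow (hAB : iIndepFun (fun m ω => (A m ω, B m ω)) μ)
    (hind : ∀ m, IndepFun (A m) (B m) μ) (hmA : ∀ m, Measurable (A m))
    (hmB : ∀ m, Measurable (B m)) (hA : ∀ m, MemLp (A m) 2 μ) (hB : ∀ m, MemLp (B m) 2 μ)
    {a b : ι → ℕ} (ha : ∀ m, a m ≤ 2) (hb : ∀ m, b m ≤ 2) :
    Integrable (fun ω => ∏ m, A m ω ^ a m * B m ω ^ b m) μ := by
  have := hAB.isProbabilityMeasure
  refine iIndepFun.integrable_fun_prod (F := fun m ω => A m ω ^ a m * B m ω ^ b m)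
    (hAB.comp (fun m p => p.1 ^ a m * p.2 ^ b m) fun m => by fun_prop) (fun m => by fun_prop)
    fun m => ?_
  exact ((hind m).comp (measurable_id.pow_const _) (measurable_id.pow_const _)).integrable_mul
    ((hA m).integrable_pow_of_le_two (ha m)) ((hB m).integrable_pow_of_le_two (hb m))

variable [DecidableEq ι]

theorem integral_mul_mul_mul_eq_ite (hAB : iIndepFun (fun m ω => (A m ω, B m ω)) μ)
    (hind : ∀ m, IndepFun (A m) (B m) μ) (hA : ∀ m, AEMeasurable (A m) μ)
    (hB : ∀ m, AEMeasurable (B m) μ) {v w : ℝ} (hA0 : ∀ m, μ[A m] = 0) (hB0 : ∀ m, μ[B m] = 0)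
    (hAv : ∀ m, ∫ ω, A m ω ^ 2 ∂μ = v) (hBw : ∀ m, ∫ ω, B m ω ^ 2 ∂μ = w) (i j k l : ι) :
    ∫ ω, A i ω * B j ω * (A k ω * B l ω) ∂μ
      = (if i = k then v else 0) * (if j = l then w else 0) := by
  have := hAB.isProbabilityMeasure
  -- `Aᵢ Aₖ = ∏ₘ Aₘ ^ (δₘᵢ + δₘₖ)` turns the integrand into a product over the independent pairs.
  have hprod : ∀ ω, A i ω * B j ω * (A k ω * B l ω) = ∏ m,
      A m ω ^ (Pi.single i 1 + Pi.single k 1 : ι → ℕ) m *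
        B m ω ^ (Pi.single j 1 + Pi.single l 1 : ι → ℕ) m := by
    intro ω
    rw [prod_mul_distrib, prod_pow_single_add_single, prod_pow_single_add_single]
    ring
  simp_rw [hprod]
  rw [integral_prod_pow_mul_pow hAB hind hA hB, prod_mul_distrib,
    prod_single_add_single_eq_ite (fun m a => ∫ ω, A m ω ^ a ∂μ) (by simp) (by simpa using hA0)
      hAv,
    prod_single_add_single_eq_ite (fun m a => ∫ ω, B m ω ^ a ∂μ) (by simp) (by simpa using hB0)
      hBw]

theorem integrable_mul_mul_mul (hAB : iIndepFun (fun m ω => (A m ω, B m ω)) μ)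
    (hind : ∀ m, IndepFun (A m) (B m) μ) (hmA : ∀ m, Measurable (A m))
    (hmB : ∀ m, Measurable (B m)) (hA : ∀ m, MemLp (A m) 2 μ) (hB : ∀ m, MemLp (B m) 2 μ)
    (i j k l : ι) : Integrable (fun ω => A i ω * B j ω * (A k ω * B l ω)) μ := by
  have hle : ∀ r s m : ι, (Pi.single r 1 + Pi.single s 1 : ι → ℕ) m ≤ 2 := by
    intro r s m
    simp only [Pi.add_apply, Pi.single_apply]
    split_ifs <;> omega
  refine (integrable_prod_pow_mul_pow hAB hind hmA hmB hA hB (hle i k) (hle j l)).congr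
    (ae_of_all _ fun ω => ?_)
  simp only [prod_mul_distrib, prod_pow_single_add_single]
  ring

theorem integral_sq_sum_mul_eq (hAB : iIndepFun (fun m ω => (A m ω, B m ω)) μ)
    (hind : ∀ m, IndepFun (A m) (B m) μ) (hmA : ∀ m, Measurable (A m))
    (hmB : ∀ m, Measurable (B m)) (hA : ∀ m, MemLp (A m) 2 μ) (hB : ∀ m, MemLp (B m) 2 μ)
    {v w : ℝ} (hA0 : ∀ m, μ[A m] = 0) (hB0 : ∀ m, μ[B m] = 0)
    (hAv : ∀ m, ∫ ω, A m ω ^ 2 ∂μ = v) (hBw : ∀ m, ∫ ω, B m ω ^ 2 ∂μ = w) (c : Matrix ι ι ℝ) :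
    ∫ ω, (∑ p : ι × ι, c p.1 p.2 * (A p.1 ω * B p.2 ω)) ^ 2 ∂μ
      = v * w * ∑ p : ι × ι, c p.1 p.2 ^ 2 := by
  have hmoment : ∀ p q : ι × ι, ∫ ω, A p.1 ω * B p.2 ω * (A q.1 ω * B q.2 ω) ∂μ
      = if p = q then v * w else 0 := by
    intro p q
    rw [integral_mul_mul_mul_eq_ite hAB hind (fun m => (hmA m).aemeasurable)
      (fun m => (hmB m).aemeasurable) hA0 hB0 hAv hBw]
    simp only [Prod.ext_iff, ite_zero_mul_ite_zero]
  have hint := integrable_mul_mul_mul hAB hind hmA hmB hA hB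
  calc ∫ ω, (∑ p : ι × ι, c p.1 p.2 * (A p.1 ω * B p.2 ω)) ^ 2 ∂μ
      = ∫ ω, ∑ p : ι × ι, ∑ q : ι × ι,
          c p.1 p.2 * c q.1 q.2 * (A p.1 ω * B p.2 ω * (A q.1 ω * B q.2 ω)) ∂μ := by
        congr with ω
        rw [sq, sum_mul_sum]
        exact sum_congr rfl fun p _ => sum_congr rfl fun q _ => by ring
    _ = ∑ p : ι × ι, ∑ q : ι × ι,
          c p.1 p.2 * c q.1 q.2 * ∫ ω, A p.1 ω * B p.2 ω * (A q.1 ω * B q.2 ω) ∂μ := by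
        rw [integral_finsetSum _ fun p _ => integrable_finsetSum _ fun q _ =>
          (hint _ _ _ _).const_mul _]
        refine sum_congr rfl fun p _ => ?_
        rw [integral_finsetSum _ fun q _ => (hint _ _ _ _).const_mul _]
        exact sum_congr rfl fun q _ => integral_const_mul _ _
    _ = v * w * ∑ p : ι × ι, c p.1 p.2 ^ 2 := by
        simp only [hmoment, mul_ite, mul_zero, sum_ite_eq, mem_univ, if_true, mul_sum]
        exact sum_congr rfl fun p _ => by ring

end Probability

/-- For i.i.d. pairs of square-integrable random variables with independent components,
E[(∑ᵢ(Xᵢ - X̄)(Yᵢ - Ȳ))²] = (n-1)·Var(X₁)·Var(Y₁). -/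
theorem expected_sq_sample_cov {Ω : Type*} [MeasurableSpace Ω] (μ : Measure Ω)
    [IsProbabilityMeasure μ] (n : ℕ) (hn : 0 < n) (X Y : Fin n → Ω → ℝ)
    (hmX : ∀ i, Measurable (X i)) (hmY : ∀ i, Measurable (Y i))
    (hX2 : ∀ i, MemLp (X i) 2 μ) (hY2 : ∀ i, MemLp (Y i) 2 μ)
    (hiid : iIndepFun (fun i ω => (X i ω, Y i ω)) μ)
    (hident : ∀ i, IdentDistrib (fun ω => (X i ω, Y i ω)) (fun ω => (X ⟨0, hn⟩ ω, Y ⟨0, hn⟩ ω)) μ μ)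
    (hXY : ∀ i, IndepFun (X i) (Y i) μ) :
    ∫ ω, (∑ i, (X i ω - (∑ j, X j ω) / n) * (Y i ω - (∑ j, Y j ω) / n)) ^ 2 ∂μ
      = (n - 1 : ℝ) * variance (X ⟨0, hn⟩) μ * variance (Y ⟨0, hn⟩) μ := by
  set i₀ : Fin n := ⟨0, hn⟩
  have : Nonempty (Fin n) := ⟨i₀⟩
  set mX := μ[X i₀]
  set mY := μ[Y i₀]
  have hidX : ∀ i, IdentDistrib (X i) (X i₀) μ μ := fun i => (hident i).comp measurable_fst
  have hidY : ∀ i, IdentDistrib (Y i) (Y i₀) μ μ := fun i => (hident i).comp measurable_snd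
  have hS : ∀ ω, ∑ i, (X i ω - (∑ j, X j ω) / n) * (Y i ω - (∑ j, Y j ω) / n)
      = ∑ p : Fin n × Fin n,
          centeringMatrix (Fin n) p.1 p.2 * ((X p.1 ω - mX) * (Y p.2 ω - mY)) :=
    fun ω => by
      simpa using sum_sub_mean_mul_sub_mean_eq_sum_centeringMatrix (X · ω) (Y · ω) mX mY
  simp_rw [hS]
  rw [integral_sq_sum_mul_eq (A := fun i ω => X i ω - mX) (B := fun i ω => Y i ω - mY)
      (hiid.comp (fun _ p => (p.1 - mX, p.2 - mY)) fun _ => by fun_prop)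
      (fun i => (hXY i).comp (measurable_sub_const mX) (measurable_sub_const mY))
      (fun i => (hmX i).sub_const mX) (fun i => (hmY i).sub_const mY)
      (fun i => (hX2 i).sub (memLp_const mX)) (fun i => (hY2 i).sub (memLp_const mY))
      (fun i => (hidX i).integral_sub_integral_eq_zero ((hX2 i₀).integrable one_le_two))
      (fun i => (hidY i).integral_sub_integral_eq_zero ((hY2 i₀).integrable one_le_two))
      (fun i => (hidX i).integral_sub_integral_sq (hmX i₀).aemeasurable)
      (fun i => (hidY i).integral_sub_integral_sq (hmY i₀).aemeasurable),
    sum_centeringMatrix_sq, Fintype.card_fin]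
  ring
end

section
/- Let (R₁,C₁),…,(Rₙ,Cₙ) be i.i.d. pairs where Rᵢ takes values in {1,…,L_r} with P(Rᵢ = a) = p_a, Cᵢ takes values in {1,…,L_j} with P(Cᵢ = b) = q_b, and Rᵢ is independent of Cᵢ. Let p̂_a = (1/n)∑ᵢ 1{Rᵢ = a} and q̂_b = (1/n)∑ᵢ 1{Cᵢ = b}. Then ∑_{a=1}^{L_r} ∑_{b=1}^{L_j} E[ ( ∑_{i=1}^n 2(1{Cᵢ = b} - q̂_b)(p̂_a - 1{Rᵢ = a}) )² ] = 4(n-1)·( ∑_{a} p_a(1-p_a) )·( ∑_{b} q_b(1-q_b) ). -/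
/-!
With `xᵢ = 1{Rᵢ = a}` and `yᵢ = 1{Cᵢ = b}`, the inner sum equals
`-2 ∑ᵢ ∑ⱼ (δᵢⱼ - 1/n) (xᵢ - pₐ) (yⱼ - q_b)`: the empirical covariance does not see the centring
constants. The row vector `(Rᵢ)ᵢ` is independent of the column vector `(Cᵢ)ᵢ`, and the entries of
each are independent, so the products `(xᵢ - pₐ)(yⱼ - q_b)` are orthogonal in `L²` with common
squared norm `pₐ(1-pₐ) q_b(1-q_b)`. Pythagoras then gives
`4 pₐ(1-pₐ) q_b(1-q_b) ∑ᵢ ∑ⱼ (δᵢⱼ - 1/n)²`, and that double sum is `n - 1`.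
-/

open MeasureTheory ProbabilityTheory Finset

section Centering

variable {n : ℕ}

theorem sum_centered_mul_centered_eq (hn : (n : ℝ) ≠ 0) (x y : Fin n → ℝ) (p q : ℝ) :
    ∑ i, (y i - (∑ j, y j) / n) * ((∑ j, x j) / n - x i)
      = -∑ i, ∑ j, ((if i = j then 1 else 0) - 1 / n) * ((x i - p) * (y j - q)) := by
  simp only [sub_mul, mul_sub, sum_sub_distrib, ite_mul, one_mul, zero_mul, sum_ite_eq,
    mem_univ, if_true, ← mul_sum, ← sum_mul, sum_const, card_univ, Fintype.card_fin,
    nsmul_eq_mul, mul_comm (y _) (x _)]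
  field_simp
  ring

theorem sum_sum_centering_sq (hn : (n : ℝ) ≠ 0) :
    ∑ i : Fin n, ∑ j : Fin n, ((if i = j then (1 : ℝ) else 0) - 1 / n) ^ 2 = (n : ℝ) - 1 := by
  have h : ∀ i j : Fin n, ((if i = j then (1 : ℝ) else 0) - 1 / n) ^ 2
      = (if i = j then 1 - 2 / (n : ℝ) else 0) + 1 / (n : ℝ) ^ 2 := by
    intro i j; split_ifs <;> ring
  simp only [h, sum_add_distrib, sum_ite_eq, mem_univ, if_true, sum_const, card_univ,
    Fintype.card_fin, nsmul_eq_mul]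
  field_simp
  ring

end Centering

section Moments

variable {Ω ι α β : Type*} [MeasurableSpace Ω] {μ : Measure Ω}

theorem integral_sq_sum_of_orthogonal {P : Type*} [Fintype P] [DecidableEq P] {W : P → Ω → ℝ}
    {s : ℝ} (hint : ∀ p q, Integrable (fun ω => W p ω * W q ω) μ)
    (horth : ∀ p q, ∫ ω, W p ω * W q ω ∂μ = if p = q then s else 0) (a : P → ℝ) :
    ∫ ω, (∑ p, a p * W p ω) ^ 2 ∂μ = s * ∑ p, a p ^ 2 := by
  have hexp : ∀ ω, (∑ p, a p * W p ω) ^ 2 = ∑ p, ∑ q, a p * a q * (W p ω * W q ω) := by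
    intro ω
    rw [sq, sum_mul_sum]
    exact sum_congr rfl fun p _ => sum_congr rfl fun q _ => by ring
  simp_rw [hexp]
  rw [integral_finsetSum _ fun p _ => integrable_finsetSum _ fun q _ => (hint p q).const_mul _]
  simp_rw [integral_finsetSum _ fun q _ => (hint _ q).const_mul _, integral_const_mul, horth]
  simp [mul_sum, sq, mul_comm]

theorem integrable_comp_of_finite [IsFiniteMeasure μ] [MeasurableSpace α]
    [MeasurableSingletonClass α] [Finite α] {Z : Ω → α} (hZ : Measurable Z) (h : α → ℝ) :
    Integrable (fun ω => h (Z ω)) μ :=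
  Integrable.of_finite.comp_measurable hZ

theorem integral_ite_eq_one_zero [MeasurableSpace α] [MeasurableSingletonClass α] [DecidableEq α]
    {Z : Ω → α} (hZ : Measurable Z) (a : α) :
    ∫ ω, (if Z ω = a then (1 : ℝ) else 0) ∂μ = (μ {ω | Z ω = a}).toReal := by
  have hA : MeasurableSet {ω | Z ω = a} := hZ (measurableSet_singleton a)
  rw [← measureReal_def, ← integral_indicator_one hA]
  congr with ω
  simp [Set.indicator_apply]

theorem integral_sub_sq_of_mul_self_eq [IsProbabilityMeasure μ] {h : Ω → ℝ} (hh : Integrable h μ)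
    (hidem : ∀ ω, h ω * h ω = h ω) {p : ℝ} (hp : ∫ ω, h ω ∂μ = p) :
    ∫ ω, (h ω - p) ^ 2 ∂μ = p * (1 - p) := by
  have hsq : ∀ ω, (h ω - p) ^ 2 = (1 - 2 * p) * h ω + p ^ 2 := fun ω => by
    linear_combination hidem ω
  simp_rw [hsq]
  rw [integral_add (hh.const_mul _) (integrable_const _), integral_const_mul, integral_const, hp]
  simp only [probReal_univ, smul_eq_mul, one_mul]
  ring

theorem integral_ite_eq_sub_sq [IsProbabilityMeasure μ] [MeasurableSpace α]
    [MeasurableSingletonClass α] [Finite α] [DecidableEq α] {Z : Ω → α} (hZ : Measurable Z)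
    (a : α) :
    ∫ ω, ((if Z ω = a then (1 : ℝ) else 0) - (μ {ω | Z ω = a}).toReal) ^ 2 ∂μ
      = (μ {ω | Z ω = a}).toReal * (1 - (μ {ω | Z ω = a}).toReal) :=
  integral_sub_sq_of_mul_self_eq (h := fun ω => if Z ω = a then (1 : ℝ) else 0)
    (integrable_comp_of_finite hZ fun x => if x = a then 1 else 0)
    (fun ω => by split_ifs <;> norm_num) (integral_ite_eq_one_zero hZ a)

theorem integral_comp_mul_comp_eq_ite [MeasurableSpace α] [DecidableEq ι] {X : ι → Ω → α}
    (hX : ∀ i, Measurable (X i)) (hind : Pairwise fun i k => X i ⟂ᵢ[μ] X k) {f : α → ℝ}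
    (hf : Measurable f) {σ : ℝ} (h0 : ∀ i, ∫ ω, f (X i ω) ∂μ = 0)
    (h2 : ∀ i, ∫ ω, f (X i ω) ^ 2 ∂μ = σ) (i k : ι) :
    ∫ ω, f (X i ω) * f (X k ω) ∂μ = if i = k then σ else 0 := by
  split_ifs with hik
  · subst hik
    simp_rw [← sq, h2]
  · have := ((hind hik).comp hf hf).integral_mul_eq_mul_integral
      (hf.comp (hX i)).aestronglyMeasurable (hf.comp (hX k)).aestronglyMeasurable
    simp only [Pi.mul_apply, Function.comp_apply] at this
    rw [this, h0, zero_mul]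

section Pairs

variable [IsProbabilityMeasure μ] [MeasurableSpace α] [MeasurableSpace β] {X : ι → Ω → α}
  {Y : ι → Ω → β}

theorem indepFun_pi_of_iIndepFun_prod [Fintype ι] (hX : ∀ i, Measurable (X i))
    (hY : ∀ i, Measurable (Y i)) (hXY : iIndepFun (fun i ω => (X i ω, Y i ω)) μ)
    (hind : ∀ i, X i ⟂ᵢ[μ] Y i) :
    (fun ω i => X i ω) ⟂ᵢ[μ] (fun ω i => Y i ω) := by
  rw [indepFun_iff_map_prod_eq_prod_map_map (by fun_prop) (by fun_prop),
    (hXY.comp (fun _ => Prod.fst) fun _ => measurable_fst).map_fun_eq_pi_map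
      (fun i => (hX i).aemeasurable),
    (hXY.comp (fun _ => Prod.snd) fun _ => measurable_snd).map_fun_eq_pi_map
      (fun i => (hY i).aemeasurable),
    ← (measurePreserving_arrowProdEquivProdArrow α β ι _ _).map_eq]
  simp_rw [← fun i => (hind i).map_prod_eq_prod_map_map (hX i).aemeasurable (hY i).aemeasurable,
    ← hXY.map_fun_eq_pi_map fun i => ((hX i).prodMk (hY i)).aemeasurable]
  rw [Measure.map_map (MeasurableEquiv.measurable _) (by fun_prop)]
  rfl

theorem integral_mul_mul_eq_ite [Fintype ι] [DecidableEq ι] (hX : ∀ i, Measurable (X i))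
    (hY : ∀ i, Measurable (Y i)) (hXY : iIndepFun (fun i ω => (X i ω, Y i ω)) μ)
    (hind : ∀ i, X i ⟂ᵢ[μ] Y i) {F : α → ℝ} {G : β → ℝ} (hF : Measurable F) (hG : Measurable G)
    {σ τ : ℝ} (hF0 : ∀ i, ∫ ω, F (X i ω) ∂μ = 0) (hF2 : ∀ i, ∫ ω, F (X i ω) ^ 2 ∂μ = σ)
    (hG0 : ∀ i, ∫ ω, G (Y i ω) ∂μ = 0) (hG2 : ∀ i, ∫ ω, G (Y i ω) ^ 2 ∂μ = τ) (p q : ι × ι) :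
    ∫ ω, F (X p.1 ω) * G (Y p.2 ω) * (F (X q.1 ω) * G (Y q.2 ω)) ∂μ
      = if p = q then σ * τ else 0 := by
  have hvec := (indepFun_pi_of_iIndepFun_prod hX hY hXY hind).comp
    (φ := fun x => F (x p.1) * F (x q.1)) (ψ := fun y => G (y p.2) * G (y q.2))
    (by fun_prop) (by fun_prop)
  have hXX : Pairwise fun i k => X i ⟂ᵢ[μ] X k := fun i k hik =>
    (hXY.indepFun hik).comp measurable_fst measurable_fst
  have hYY : Pairwise fun i k => Y i ⟂ᵢ[μ] Y k := fun i k hik =>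
    (hXY.indepFun hik).comp measurable_snd measurable_snd
  calc ∫ ω, F (X p.1 ω) * G (Y p.2 ω) * (F (X q.1 ω) * G (Y q.2 ω)) ∂μ
      = ∫ ω, F (X p.1 ω) * F (X q.1 ω) * (G (Y p.2 ω) * G (Y q.2 ω)) ∂μ := by
        congr 1 with ω; ring
    _ = (∫ ω, F (X p.1 ω) * F (X q.1 ω) ∂μ) * ∫ ω, G (Y p.2 ω) * G (Y q.2 ω) ∂μ :=
        hvec.integral_mul_eq_mul_integral (by fun_prop) (by fun_prop)
    _ = if p = q then σ * τ else 0 := by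
        rw [integral_comp_mul_comp_eq_ite hX hXX hF hF0 hF2,
          integral_comp_mul_comp_eq_ite hY hYY hG hG0 hG2]
        simp only [Prod.ext_iff]
        split_ifs <;> simp_all

end Pairs

theorem integral_sq_sum_centered_mul_centered [IsProbabilityMeasure μ] [MeasurableSpace α]
    [MeasurableSingletonClass α] [Finite α] [MeasurableSpace β] [MeasurableSingletonClass β]
    [Finite β] {n : ℕ} (hn : (n : ℝ) ≠ 0)
    {X : Fin n → Ω → α} {Y : Fin n → Ω → β} (hX : ∀ i, Measurable (X i))
    (hY : ∀ i, Measurable (Y i)) (hXY : iIndepFun (fun i ω => (X i ω, Y i ω)) μ)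
    (hind : ∀ i, X i ⟂ᵢ[μ] Y i) (f : α → ℝ) (g : β → ℝ) {p q σ τ : ℝ}
    (hp : ∀ i, ∫ ω, f (X i ω) ∂μ = p) (hσ : ∀ i, ∫ ω, (f (X i ω) - p) ^ 2 ∂μ = σ)
    (hq : ∀ i, ∫ ω, g (Y i ω) ∂μ = q) (hτ : ∀ i, ∫ ω, (g (Y i ω) - q) ^ 2 ∂μ = τ) :
    ∫ ω, (∑ i, 2 * (g (Y i ω) - (∑ j, g (Y j ω)) / n) * ((∑ j, f (X j ω)) / n - f (X i ω))) ^ 2 ∂μ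
      = 4 * (n - 1) * σ * τ := by
  set W : Fin n × Fin n → Ω → ℝ := fun ij ω => (f (X ij.1 ω) - p) * (g (Y ij.2 ω) - q)
  set c : Fin n × Fin n → ℝ := fun ij => (if ij.1 = ij.2 then 1 else 0) - 1 / n
  have hpoint : ∀ ω, (∑ i, 2 * (g (Y i ω) - (∑ j, g (Y j ω)) / n)
      * ((∑ j, f (X j ω)) / n - f (X i ω))) ^ 2 = 4 * (∑ ij, c ij * W ij ω) ^ 2 := by
    intro ω
    simp_rw [mul_assoc (2 : ℝ), ← mul_sum, sum_centered_mul_centered_eq hn _ _ p q]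
    rw [Fintype.sum_prod_type]
    simp only [c, W]
    ring
  have hint : ∀ ij kl, Integrable (fun ω => W ij ω * W kl ω) μ := fun ij kl =>
    integrable_comp_of_finite (Z := fun ω => (fun i => X i ω, fun i => Y i ω)) (by fun_prop)
      fun v => (f (v.1 ij.1) - p) * (g (v.2 ij.2) - q) * ((f (v.1 kl.1) - p) * (g (v.2 kl.2) - q))
  have hf0 : ∀ i, ∫ ω, (f (X i ω) - p) ∂μ = 0 := fun i => by
    rw [integral_sub (integrable_comp_of_finite (hX i) f) (integrable_const p),
      hp, integral_const, probReal_univ, one_smul, sub_self]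
  have hg0 : ∀ i, ∫ ω, (g (Y i ω) - q) ∂μ = 0 := fun i => by
    rw [integral_sub (integrable_comp_of_finite (hY i) g) (integrable_const q),
      hq, integral_const, probReal_univ, one_smul, sub_self]
  have horth := integral_mul_mul_eq_ite hX hY hXY hind (measurable_of_finite fun x => f x - p)
    (measurable_of_finite fun y => g y - q) hf0 hσ hg0 hτ
  simp_rw [hpoint]
  rw [integral_const_mul, integral_sq_sum_of_orthogonal hint horth, Fintype.sum_prod_type]
  simp only [c]
  rw [sum_sum_centering_sq hn]
  ring

end Moments

theorem calibration_weight_discrete_discrete_general {Ω : Type*} [MeasurableSpace Ω] (μ : Measure Ω)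
    [IsProbabilityMeasure μ] (n : ℕ) (hn : 0 < n) (Lr Lj : ℕ)
    (R : Fin n → Ω → Fin Lr) (C : Fin n → Ω → Fin Lj) (pa : Fin Lr → ℝ) (qb : Fin Lj → ℝ)
    (hmR : ∀ i, Measurable (R i)) (hmC : ∀ i, Measurable (C i))
    (hpa : ∀ i a, (μ {ω | R i ω = a}).toReal = pa a)
    (hqb : ∀ i b, (μ {ω | C i ω = b}).toReal = qb b)
    (hiid : iIndepFun (fun i ω => (R i ω, C i ω)) μ)
    (hRC : ∀ i, IndepFun (R i) (C i) μ) :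
    ∑ a : Fin Lr, ∑ b : Fin Lj, ∫ ω,
        (∑ i, 2 * ((if C i ω = b then (1 : ℝ) else 0)
              - (∑ j, if C j ω = b then (1 : ℝ) else 0) / n)
            * ((∑ j, if R j ω = a then (1 : ℝ) else 0) / n
              - (if R i ω = a then (1 : ℝ) else 0))) ^ 2 ∂μ
      = 4 * (n - 1 : ℝ) * (∑ a : Fin Lr, pa a * (1 - pa a)) * (∑ b : Fin Lj, qb b * (1 - qb b)) := by
  have hn' : (n : ℝ) ≠ 0 := Nat.cast_ne_zero.mpr hn.ne'
  calc _ = ∑ a : Fin Lr, ∑ b : Fin Lj,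
        4 * (n - 1 : ℝ) * (pa a * (1 - pa a)) * (qb b * (1 - qb b)) :=
        sum_congr rfl fun a _ => sum_congr rfl fun b _ =>
          integral_sq_sum_centered_mul_centered hn' hmR hmC hiid hRC
            (fun r => if r = a then 1 else 0) (fun c => if c = b then 1 else 0)
            (fun i => (integral_ite_eq_one_zero (hmR i) a).trans (hpa i a))
            (fun i => hpa i a ▸ integral_ite_eq_sub_sq (hmR i) a)
            (fun i => (integral_ite_eq_one_zero (hmC i) b).trans (hqb i b))
            (fun i => hqb i b ▸ integral_ite_eq_sub_sq (hmC i) b)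
    _ = _ := by
        simp only [mul_sum, sum_mul, mul_assoc]
        exact sum_comm

/-- Calibration weight identity for a discrete–discrete edge: for i.i.d. pairs (Rᵢ, Cᵢ) with
Rᵢ ⊥ Cᵢ, ∑ₐ∑_b E[(∑ᵢ 2(1{Cᵢ=b} - q̂_b)(p̂ₐ - 1{Rᵢ=a}))²]
  = 4(n-1)·(∑ₐ pₐ(1-pₐ))·(∑_b q_b(1-q_b)). -/
theorem calibration_weight_discrete_discrete {Ω : Type*} [MeasurableSpace Ω] (μ : Measure Ω)
    [IsProbabilityMeasure μ] (n : ℕ) (hn : 0 < n) (Lr Lj : ℕ)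
    (R : Fin n → Ω → Fin Lr) (C : Fin n → Ω → Fin Lj) (pa : Fin Lr → ℝ) (qb : Fin Lj → ℝ)
    (hmR : ∀ i, Measurable (R i)) (hmC : ∀ i, Measurable (C i))
    (hpa : ∀ i a, (μ {ω | R i ω = a}).toReal = pa a)
    (hqb : ∀ i b, (μ {ω | C i ω = b}).toReal = qb b)
    (hiid : iIndepFun (fun i ω => (R i ω, C i ω)) μ)
    (hident : ∀ i, IdentDistrib (fun ω => (R i ω, C i ω)) (fun ω => (R ⟨0, hn⟩ ω, C ⟨0, hn⟩ ω)) μ μ)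
    (hRC : ∀ i, IndepFun (R i) (C i) μ) :
    ∑ a : Fin Lr, ∑ b : Fin Lj, ∫ ω,
        (∑ i, 2 * ((if C i ω = b then (1 : ℝ) else 0)
              - (∑ j, if C j ω = b then (1 : ℝ) else 0) / n)
            * ((∑ j, if R j ω = a then (1 : ℝ) else 0) / n
              - (if R i ω = a then (1 : ℝ) else 0))) ^ 2 ∂μ
      = 4 * (n - 1 : ℝ) * (∑ a : Fin Lr, pa a * (1 - pa a)) * (∑ b : Fin Lj, qb b * (1 - qb b)) :=
  calibration_weight_discrete_discrete_general μ n hn Lr Lj R C pa qb hmR hmC hpa hqb hiid hRC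
end
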